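/- Let 0 < α ≤ 1. If E_α(i x^α) · E_α(-i x^α) = 1 for all real x ≥ 0, then α = 1. -/

import Mathlib

/-!
Comparing the coefficients of `w²` in `E_α(i w) E_α(-i w) = 1` as `w → 0` gives
`Γ(1 + α)⁻² = 2 Γ(1 + 2α)⁻¹`, that is `Γ(1 + 2α) = 2 Γ(1 + α)²`, an identity which holds at `α = 1`.
For `0 < α < 1` it fails strictly, by log-convexity of `Γ` together with `Γ(x + 1) = x Γ(x)`:
the slope of `log Γ` on `[1 + α, 2]` is at most its slope `log (1 + α)` on `[1 + α, 2 + α]`,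
which is less than its slope `log c` on `[c, c + 1]` for `c = min (1 + 2α) 2`, which in turn is
at most its slope on `[1 + 2α, 3]`. Since `log Γ 2 = 0` and `log Γ 3 = log 2`, this chain of slopes
says exactly `Γ(1 + 2α) < 2 Γ(1 + α)²`.
-/

open Real Set Filter Topology Asymptotics

theorem ConvexOn.slope_le_slope {𝕜 : Type*} [Field 𝕜] [LinearOrder 𝕜] [IsStrictOrderedRing 𝕜]
    {s : Set 𝕜} {f : 𝕜 → 𝕜} {a b c d : 𝕜} (hf : ConvexOn 𝕜 s f) (ha : a ∈ s) (hb : b ∈ s)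
    (hc : c ∈ s) (hd : d ∈ s) (hab : a < b) (hcd : c < d) (hac : a ≤ c) (hbd : b ≤ d) :
    slope f a b ≤ slope f c d := calc
  slope f a b ≤ slope f a d :=
    hf.slope_mono ha ⟨hb, hab.ne'⟩ ⟨hd, (hab.trans_le hbd).ne'⟩ hbd
  _ = slope f d a := slope_comm f a d
  _ ≤ slope f d c := hf.slope_mono hd ⟨ha, (hab.trans_le hbd).ne⟩ ⟨hc, hcd.ne⟩ hac
  _ = slope f c d := slope_comm f d c

namespace Real

theorem slope_log_Gamma_add_one {x : ℝ} (hx : 0 < x) :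
    slope (log ∘ Gamma) x (x + 1) = log x := by
  rw [slope_def_field, Function.comp_apply, Function.comp_apply, Gamma_add_one hx.ne',
    log_mul hx.ne' (Gamma_pos_of_pos hx).ne']
  simp

theorem Gamma_one_add_two_mul_lt_two_mul_sq {α : ℝ} (h0 : 0 < α) (h1 : α < 1) :
    Gamma (1 + 2 * α) < 2 * Gamma (1 + α) ^ 2 := by
  have hg := convexOn_log_Gamma
  set c := min (1 + 2 * α) 2
  have hc : 1 + α < c := lt_min (by linarith) (by linarith)
  have hslope : slope (log ∘ Gamma) (1 + α) 2 < slope (log ∘ Gamma) (1 + 2 * α) 3 := calc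
    slope (log ∘ Gamma) (1 + α) 2 ≤ slope (log ∘ Gamma) (1 + α) (1 + α + 1) :=
      hg.slope_le_slope (mem_Ioi.2 (by linarith)) (mem_Ioi.2 (by norm_num))
        (mem_Ioi.2 (by linarith)) (mem_Ioi.2 (by linarith)) (by linarith) (by linarith)
        le_rfl (by linarith)
    _ = log (1 + α) := slope_log_Gamma_add_one (by linarith)
    _ < log c := log_lt_log (by linarith) hc
    _ = slope (log ∘ Gamma) c (c + 1) := (slope_log_Gamma_add_one (by linarith)).symm
    _ ≤ slope (log ∘ Gamma) (1 + 2 * α) 3 :=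
      hg.slope_le_slope (mem_Ioi.2 (by linarith)) (mem_Ioi.2 (by linarith))
        (mem_Ioi.2 (by linarith)) (mem_Ioi.2 (by norm_num)) (by linarith) (by linarith)
        (min_le_left _ _) (by linarith [min_le_right (1 + 2 * α) 2])
  have hΓ3 : Gamma 3 = 2 := by simp
  rw [slope_def_field, slope_def_field] at hslope
  simp only [Function.comp_apply, Gamma_two, hΓ3, log_one] at hslope
  have hG : 0 < Gamma (1 + α) := Gamma_pos_of_pos (by linarith)
  rw [← log_lt_log_iff (Gamma_pos_of_pos (by linarith)) (by positivity),
    log_mul two_ne_zero (by positivity), log_pow]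
  rw [div_lt_div_iff₀ (by linarith) (by linarith)] at hslope
  push_cast
  nlinarith

end Real

section PowerSeries

variable {𝕜 : Type*} [NormedField 𝕜] [CompleteSpace 𝕜] {a : ℕ → 𝕜} {M : ℝ}

theorem norm_tsum_mul_pow_sub_sum_le (ha : ∀ k, ‖a k‖ ≤ M) {w : 𝕜} (hw : ‖w‖ < 1) (n : ℕ) :
    ‖∑' k, a k * w ^ k - ∑ k ∈ Finset.range n, a k * w ^ k‖ ≤ M * ‖w‖ ^ n / (1 - ‖w‖) := by
  have hbound : ∀ k, ‖a k * w ^ k‖ ≤ M * ‖w‖ ^ k := fun k => by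
    rw [norm_mul, norm_pow]
    exact mul_le_mul_of_nonneg_right (ha k) (by positivity)
  have hsum : Summable (fun k => a k * w ^ k) :=
    Summable.of_norm_bounded ((summable_geometric_of_lt_one (norm_nonneg w) hw).mul_left M) hbound
  rw [← hsum.sum_add_tsum_nat_add n, add_sub_cancel_left, div_eq_mul_inv]
  refine tsum_of_norm_bounded ((hasSum_geometric_of_lt_one (norm_nonneg w) hw).mul_left _)
    fun k => ?_
  calc ‖a (k + n) * w ^ (k + n)‖ ≤ M * ‖w‖ ^ (k + n) := hbound (k + n)
    _ = M * ‖w‖ ^ n * ‖w‖ ^ k := by ring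

theorem isBigO_tsum_mul_pow_sub_sum (ha : ∀ k, ‖a k‖ ≤ M) (n : ℕ) :
    (fun w => ∑' k, a k * w ^ k - ∑ k ∈ Finset.range n, a k * w ^ k) =O[𝓝 0] (· ^ n) := by
  have hM : 0 ≤ M := (norm_nonneg _).trans (ha 0)
  refine IsBigO.of_bound (2 * M) ?_
  filter_upwards [Metric.ball_mem_nhds (0 : 𝕜) one_half_pos] with w hw
  rw [mem_ball_zero_iff] at hw
  refine (norm_tsum_mul_pow_sub_sum_le ha (hw.trans one_half_lt_one) n).trans ?_
  rw [div_le_iff₀ (by linarith), norm_pow]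
  nlinarith [pow_nonneg (norm_nonneg w) n, mul_nonneg hM (pow_nonneg (norm_nonneg w) n)]

end PowerSeries

theorem eq_zero_of_isBigO_mul_pow {𝕜 : Type*} [NontriviallyNormedField 𝕜] {l : Filter 𝕜}
    [l.NeBot] (hl : l ≤ 𝓝[≠] 0) {A : 𝕜} {n : ℕ}
    (h : (fun w => A * w ^ n) =O[l] (· ^ (n + 1))) : A = 0 := by
  by_contra hA
  have hlo : (fun w : 𝕜 => w ^ (n + 1)) =o[l] (· ^ n) :=
    (isLittleO_pow_pow n.lt_succ_self).mono (hl.trans nhdsWithin_le_nhds)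
  refine isLittleO_irrefl ?_ ((isLittleO_const_mul_left_iff hA).1 (h.trans_isLittleO hlo))
  exact (eventually_mem_nhdsWithin.filter_mono hl).frequently.mono fun w hw => pow_ne_zero n hw

noncomputable def mittagLeffler (α : ℝ) (w : ℂ) : ℂ :=
  ∑' k : ℕ, w ^ k / Complex.Gamma ((1 + k * α : ℝ) : ℂ)

theorem mittagLeffler_eq_tsum (α : ℝ) (w : ℂ) :
    mittagLeffler α w = ∑' k : ℕ, (Gamma (1 + k * α) : ℂ)⁻¹ * w ^ k := by
  simp only [mittagLeffler, Complex.Gamma_ofReal, div_eq_inv_mul]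

section MittagLeffler

variable {α : ℝ}

theorem exists_norm_inv_Gamma_one_add_mul_le (hα : 0 ≤ α) :
    ∃ M, ∀ k : ℕ, ‖(Gamma (1 + k * α) : ℂ)⁻¹‖ ≤ M := by
  obtain ⟨x₀, hx₀, hmin⟩ := exists_isMinOn_Gamma_Ioi
  have hΓx₀ : 0 < Gamma x₀ := Gamma_pos_of_pos (by linarith [hx₀.1])
  refine ⟨(Gamma x₀)⁻¹, fun k => ?_⟩
  have hpos : (0 : ℝ) < 1 + k * α := by positivity
  rw [norm_inv, Complex.norm_real, Real.norm_of_nonneg (Gamma_pos_of_pos hpos).le]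
  exact inv_anti₀ hΓx₀ (hmin (mem_Ioi.2 hpos))

theorem isBigO_mittagLeffler_one (hα : 0 ≤ α) :
    mittagLeffler α =O[𝓝 0] (fun _ => (1 : ℂ)) := by
  obtain ⟨M, hM⟩ := exists_norm_inv_Gamma_one_add_mul_le hα
  simpa [← mittagLeffler_eq_tsum] using isBigO_tsum_mul_pow_sub_sum hM 0

theorem isBigO_mittagLeffler_sub_quadratic (hα : 0 ≤ α) :
    (fun w => mittagLeffler α w -
      (1 + (Gamma (1 + α) : ℂ)⁻¹ * w + (Gamma (1 + 2 * α) : ℂ)⁻¹ * w ^ 2)) =O[𝓝 0] (· ^ 3) := by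
  obtain ⟨M, hM⟩ := exists_norm_inv_Gamma_one_add_mul_le hα
  refine (isBigO_tsum_mul_pow_sub_sum hM 3).congr_left fun w => ?_
  simp [Finset.sum_range_succ, mittagLeffler_eq_tsum, mul_comm (2 : ℝ)]

open Complex in
theorem Gamma_one_add_two_mul_eq_of_mittagLeffler_mul_eq_one (hα : 0 ≤ α)
    {l : Filter ℂ} [l.NeBot] (hl : l ≤ 𝓝[≠] 0)
    (h : ∀ᶠ w in l, mittagLeffler α (I * w) * mittagLeffler α (-I * w) = 1) :
    Real.Gamma (1 + 2 * α) = 2 * Real.Gamma (1 + α) ^ 2 := by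
  set a : ℂ := (Real.Gamma (1 + α) : ℂ)⁻¹
  set b : ℂ := (Real.Gamma (1 + 2 * α) : ℂ)⁻¹
  set p : ℂ → ℂ := fun w => 1 + a * w + b * w ^ 2
  have hl₀ : l ≤ 𝓝 0 := hl.trans nhdsWithin_le_nhds
  have hscale : ∀ c : ℂ, Tendsto (c * ·) l (𝓝 0) ∧ (fun w => (c * w) ^ 3) =O[l] (· ^ 3) :=
    fun c => ⟨by simpa using ((continuous_const_mul c).tendsto 0).mono_left hl₀,
      by simpa only [mul_pow] using isBigO_const_mul_self (c ^ 3) (· ^ 3) l⟩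
  have hrem : ∀ c : ℂ, (fun w => mittagLeffler α (c * w) - p (c * w)) =O[l] (· ^ 3) :=
    fun c => ((isBigO_mittagLeffler_sub_quadratic hα).comp_tendsto (hscale c).1).trans
      (hscale c).2
  have hbdd : ∀ c : ℂ, (fun w => mittagLeffler α (c * w)) =O[l] (fun _ => (1 : ℂ)) ∧
      (fun w => p (c * w)) =O[l] (fun _ => (1 : ℂ)) :=
    fun c => ⟨(isBigO_mittagLeffler_one hα).comp_tendsto (hscale c).1,
      ((by fun_prop : Continuous p).tendsto 0).isBigO_one ℂ |>.comp_tendsto (hscale c).1⟩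
  have hprod : (fun w => mittagLeffler α (I * w) * mittagLeffler α (-I * w)
      - p (I * w) * p (-I * w)) =O[l] (· ^ 3) := by
    have h₁ := (hrem I).mul (hbdd (-I)).1
    have h₂ := (hbdd I).2.mul (hrem (-I))
    simp only [mul_one, one_mul] at h₁ h₂
    exact (h₁.add h₂).congr_left fun w => by ring
  have hquartic : (fun w => b ^ 2 * w ^ 4) =O[l] (· ^ 3) :=
    ((isLittleO_pow_pow (by norm_num : 3 < 4)).isBigO.mono hl₀).const_mul_left _
  have hcoeff : (fun w => (a ^ 2 - 2 * b) * w ^ 2) =O[l] (· ^ 3) := by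
    refine (hprod.neg_left.sub hquartic).congr' ?_ EventuallyEq.rfl
    filter_upwards [h] with w hw
    rw [hw]
    -- `p (I * w) * p (-I * w) = 1 + (a ^ 2 - 2 * b) * w ^ 2 + b ^ 2 * w ^ 4`
    linear_combination (2 * b * w ^ 2 - a ^ 2 * w ^ 2 + b ^ 2 * w ^ 4 * (I ^ 2 - 1)) * I_sq
  have hab : a ^ 2 - 2 * b = 0 := eq_zero_of_isBigO_mul_pow hl hcoeff
  rw [sub_eq_zero, inv_pow, inv_eq_iff_eq_inv, mul_inv, inv_inv] at hab
  exact_mod_cast (by linear_combination -2 * hab :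
    (Real.Gamma (1 + 2 * α) : ℂ) = 2 * Real.Gamma (1 + α) ^ 2)

end MittagLeffler

/-- If `0 < α ≤ 1` and `E_α(i x^α) E_α(-i x^α) = 1` for all `x ≥ 0`, then `α = 1`. -/
theorem product_eq_one_forces_alpha_eq_one (α : ℝ) (hα0 : 0 < α) (hα1 : α ≤ 1)
    (h : ∀ x : ℝ, 0 ≤ x →
      (∑' k : ℕ, (Complex.I * ((x ^ α : ℝ) : ℂ)) ^ k /
          Complex.Gamma ((1 + k * α : ℝ) : ℂ)) *
        (∑' k : ℕ, (-Complex.I * ((x ^ α : ℝ) : ℂ)) ^ k /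
          Complex.Gamma ((1 + k * α : ℝ) : ℂ)) = 1) :
    α = 1 := by
  have hl : map ((↑) : ℝ → ℂ) (𝓝[>] 0) ≤ 𝓝[≠] 0 :=
    tendsto_nhdsWithin_of_tendsto_nhds_of_eventually_within _
      ((Complex.continuous_ofReal.tendsto' 0 0 Complex.ofReal_zero).mono_left nhdsWithin_le_nhds)
      (eventually_nhdsWithin_of_forall fun z hz => Complex.ofReal_ne_zero.2 (ne_of_gt hz))
  have hmul : ∀ᶠ w in map ((↑) : ℝ → ℂ) (𝓝[>] 0),
      mittagLeffler α (Complex.I * w) * mittagLeffler α (-Complex.I * w) = 1 := by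
    refine eventually_map.2 (eventually_nhdsWithin_of_forall fun z hz => ?_)
    have := h (z ^ α⁻¹) (rpow_nonneg (le_of_lt hz) _)
    rwa [Real.rpow_inv_rpow (le_of_lt hz) hα0.ne'] at this
  have hΓ := Gamma_one_add_two_mul_eq_of_mittagLeffler_mul_eq_one hα0.le hl hmul
  by_contra hne
  exact (Real.Gamma_one_add_two_mul_lt_two_mul_sq hα0 (lt_of_le_of_ne hα1 hne)).ne hΓ
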